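/- Let H ∈ (0,1) and let e_{m,k} denote the Faber–Schauder functions on [0,1]. Let θ_{m,k} ∈ {−1, +1} be arbitrary signs and define the Takagi-class function x(t) = Σ_{m=0}^∞ 2^{m(1/2 − H)} Σ_{k=0}^{2^m − 1} θ_{m,k} e_{m,k}(t), which converges uniformly and defines a continuous function on [0,1]. Then the scaled dyadic quadratic variation sums with exponent γ = 1 − 2H converge: lim_{n→∞} 2^{−n(1−2H)} Σ_{k=0}^{2^n − 1} (x((k+1)/2^n) − x(k/2^n))² = 1 / (2^{2−2H} − 1). -/

import Mathlib

/-!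
At a dyadic point of level `n` only the levels `m < n` of a Schauder series `Σ c_{m,j} e_{m,j}`
are nonzero, and on the `k`-th dyadic interval of level `n` the level-`m` block is linear with
slope `± c_{m,j} 2^{m/2}`, where `j = ⌊k / 2^{n-m}⌋` and the sign is bit `n-m-1` of `k`.
Flipping bit `n-m'-1` of `k` fixes the level-`m` increments for `m < m'` and negates the
level-`m'` ones, so increments of different levels are orthogonal in `k`, and the dyadic
quadratic variation at level `n` is `2^{-n} Σ_{m<n} Σ_j c_{m,j}²`. For the Takagi-class
coefficients `c_{m,j} = ±2^{m(1/2-H)}` this is `2^{-n} Σ_{m<n} a^m` with `a = 2^{2-2H} > 1`,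
so the scaled sums `Σ_{m<n} a^{m-n}` tend to `1/(a-1)`.
-/

open Filter Topology

/-- The Faber–Schauder function `e_{m,k}` on `[0,1]`: supported on `[k 2⁻ᵐ, (k+1) 2⁻ᵐ]`,
piecewise linear with slope `2^{m/2}` on the left half of its support and slope `-2^{m/2}`
on the right half, vanishing at the endpoints. -/
noncomputable def faberSchauder (m k : ℕ) (t : ℝ) : ℝ :=
  (2 : ℝ) ^ ((m : ℝ) / 2) * max 0 (min (t - (k : ℝ) / 2 ^ m) (((k : ℝ) + 1) / 2 ^ m - t))

open Finset

lemma faberSchauder_nonneg (m k : ℕ) (t : ℝ) : 0 ≤ faberSchauder m k t :=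
  mul_nonneg (by positivity) (le_max_left _ _)

lemma faberSchauder_eq_zero_of_notMem_Ioo {m k : ℕ} {t : ℝ}
    (ht : t ∉ Set.Ioo ((k : ℝ) / 2 ^ m) (((k : ℝ) + 1) / 2 ^ m)) :
    faberSchauder m k t = 0 := by
  rw [Set.mem_Ioo, not_and_or, not_lt, not_lt] at ht
  refine mul_eq_zero_of_right _ (max_eq_left ?_)
  rcases ht with ht | ht
  · exact (min_le_left _ _).trans (by linarith)
  · exact (min_le_right _ _).trans (by linarith)

lemma faberSchauder_le (m k : ℕ) (t : ℝ) :
    faberSchauder m k t ≤ (2 : ℝ) ^ ((m : ℝ) / 2) / 2 ^ (m + 1) := by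
  rw [div_eq_mul_one_div]
  refine mul_le_mul_of_nonneg_left (max_le (by positivity) ?_) (by positivity)
  have : (1 : ℝ) / 2 ^ (m + 1) = (1 / 2 ^ m) / 2 := by rw [pow_succ]; ring
  rw [this, le_div_iff₀ two_pos]
  have hsum : (t - (k : ℝ) / 2 ^ m) + (((k : ℝ) + 1) / 2 ^ m - t) = 1 / 2 ^ m := by ring
  linarith [min_le_left (t - (k : ℝ) / 2 ^ m) (((k : ℝ) + 1) / 2 ^ m - t),
    min_le_right (t - (k : ℝ) / 2 ^ m) (((k : ℝ) + 1) / 2 ^ m - t)]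

lemma eq_floor_of_faberSchauder_ne_zero {m k : ℕ} {t : ℝ} (h : faberSchauder m k t ≠ 0) :
    k = ⌊2 ^ m * t⌋₊ := by
  obtain ⟨hlo, hhi⟩ : t ∈ Set.Ioo ((k : ℝ) / 2 ^ m) (((k : ℝ) + 1) / 2 ^ m) := by
    by_contra ht; exact h (faberSchauder_eq_zero_of_notMem_Ioo ht)
  rw [div_lt_iff₀' (by positivity)] at hlo
  rw [lt_div_iff₀' (by positivity)] at hhi
  exact ((Nat.floor_eq_iff ((Nat.cast_nonneg k).trans hlo.le)).2 ⟨hlo.le, hhi⟩).symm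

lemma continuous_faberSchauder (m k : ℕ) : Continuous (faberSchauder m k) := by
  unfold faberSchauder; fun_prop

lemma natCast_div_two_pow_eq {m n : ℕ} (h : m ≤ n) (a : ℕ) :
    (a : ℝ) / 2 ^ m = ((a * 2 ^ (n - m) : ℕ) : ℝ) / 2 ^ n := by
  obtain ⟨d, rfl⟩ := Nat.exists_eq_add_of_le h
  rw [Nat.add_sub_cancel_left, pow_add]
  push_cast
  field_simp

lemma faberSchauder_dyadic_eq_zero {m n : ℕ} (h : n ≤ m) (k i : ℕ) :
    faberSchauder m k ((i : ℝ) / 2 ^ n) = 0 := by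
  rw [natCast_div_two_pow_eq h]
  refine faberSchauder_eq_zero_of_notMem_Ioo fun ⟨hlo, hhi⟩ => ?_
  rw [div_lt_div_iff_of_pos_right (by positivity)] at hlo hhi
  norm_cast at hlo hhi
  omega


def dyadicIcc (m k : ℕ) : Set ℝ := Set.Icc ((k : ℝ) / 2 ^ m) (((k : ℝ) + 1) / 2 ^ m)

lemma dyadicIcc_subset {m n : ℕ} (h : m ≤ n) (k : ℕ) :
    dyadicIcc n k ⊆ dyadicIcc m (k / 2 ^ (n - m)) := by
  have hpos : 0 < 2 ^ (n - m) := by positivity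
  refine Set.Icc_subset_Icc ?_ ?_
  · rw [natCast_div_two_pow_eq h, div_le_div_iff_of_pos_right (by positivity)]
    exact_mod_cast Nat.div_mul_le_self k _
  · rw [← Nat.cast_succ, ← Nat.cast_succ, natCast_div_two_pow_eq h,
      div_le_div_iff_of_pos_right (by positivity)]
    have := Nat.lt_div_mul_add (a := k) hpos
    exact_mod_cast (by rw [Nat.succ_mul]; omega : k + 1 ≤ (k / 2 ^ (n - m) + 1) * 2 ^ (n - m))

lemma faberSchauder_eq_zero_of_ne {m i j : ℕ} {t : ℝ} (hij : j ≠ i)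
    (ht : t ∈ dyadicIcc m i) :
    faberSchauder m j t = 0 := by
  refine faberSchauder_eq_zero_of_notMem_Ioo fun ⟨hlo, hhi⟩ => ?_
  obtain ⟨hi, hi'⟩ := ht
  have hlt : (j : ℝ) < i + 1 := by
    have := hlo.trans_le hi'; rwa [div_lt_div_iff_of_pos_right (by positivity)] at this
  have hgt : (i : ℝ) < j + 1 := by
    have := hi.trans_lt hhi; rwa [div_lt_div_iff_of_pos_right (by positivity)] at this
  norm_cast at hlt hgt
  omega

lemma faberSchauder_of_mem_left_half {m i : ℕ} {t : ℝ} (ht : t ∈ dyadicIcc (m + 1) (2 * i)) :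
    faberSchauder m i t = (2 : ℝ) ^ ((m : ℝ) / 2) * (t - i / 2 ^ m) := by
  obtain ⟨hlo, hhi⟩ := ht
  rw [pow_succ] at hlo hhi
  push_cast at hlo hhi
  have hlo' : (i : ℝ) / 2 ^ m ≤ t := by
    rwa [mul_comm ((2 : ℝ) ^ m), mul_div_mul_left _ _ two_ne_zero] at hlo
  have hhi' : t - i / 2 ^ m ≤ ((i : ℝ) + 1) / 2 ^ m - t := by
    have : (2 * (i : ℝ) + 1) / (2 ^ m * 2) = (i / 2 ^ m + (i + 1) / 2 ^ m) / 2 := by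
      field_simp; ring
    linarith
  rw [faberSchauder, min_eq_left hhi', max_eq_right (by linarith)]

lemma faberSchauder_of_mem_right_half {m i : ℕ} {t : ℝ}
    (ht : t ∈ dyadicIcc (m + 1) (2 * i + 1)) :
    faberSchauder m i t = (2 : ℝ) ^ ((m : ℝ) / 2) * ((i + 1) / 2 ^ m - t) := by
  obtain ⟨hlo, hhi⟩ := ht
  rw [pow_succ] at hlo hhi
  push_cast at hlo hhi
  have hhi' : t ≤ ((i : ℝ) + 1) / 2 ^ m := by
    rwa [show (2 * (i : ℝ) + 1 + 1) = (i + 1) * 2 by ring,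
      mul_div_mul_right _ _ two_ne_zero] at hhi
  have hlo' : ((i : ℝ) + 1) / 2 ^ m - t ≤ t - i / 2 ^ m := by
    have : (2 * (i : ℝ) + 1) / (2 ^ m * 2) = (i / 2 ^ m + (i + 1) / 2 ^ m) / 2 := by
      field_simp; ring
    linarith
  rw [faberSchauder, min_eq_right hlo', max_eq_right (by linarith)]

-- Bit `n-m-1` of `k` says whether the `k`-th level-`n` dyadic interval lies in the left or
-- the right half of its level-`m` parent.
noncomputable def dyadicSign (n m k : ℕ) : ℝ := if k.testBit (n - m - 1) then -1 else 1

lemma faberSchauder_increment {m n : ℕ} (h : m < n) (k : ℕ) :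
    faberSchauder m (k / 2 ^ (n - m)) (((k : ℝ) + 1) / 2 ^ n)
      - faberSchauder m (k / 2 ^ (n - m)) ((k : ℝ) / 2 ^ n)
      = dyadicSign n m k * ((2 : ℝ) ^ ((m : ℝ) / 2) / 2 ^ n) := by
  -- the index of the level-`(m+1)` interval containing the `k`-th one of level `n`
  set i := k / 2 ^ (n - (m + 1))
  have hsub : dyadicIcc n k ⊆ dyadicIcc (m + 1) i := dyadicIcc_subset h k
  have hleft : (k : ℝ) / 2 ^ n ∈ dyadicIcc n k := ⟨le_rfl, by gcongr; linarith⟩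
  have hright : ((k : ℝ) + 1) / 2 ^ n ∈ dyadicIcc n k := ⟨by gcongr; linarith, le_rfl⟩
  have hparent : k / 2 ^ (n - m) = i / 2 := by
    rw [Nat.div_div_eq_div_mul, ← pow_succ]; congr 2; omega
  have hbit : k.testBit (n - m - 1) = decide (i % 2 = 1) := by
    rw [Nat.testBit_eq_decide_div_mod_eq, Nat.sub_sub]
  rw [dyadicSign, hbit, hparent]
  rcases Nat.even_or_odd' i with ⟨j, hj | hj⟩
  · rw [hj] at hsub
    rw [hj, Nat.mul_div_cancel_left j two_pos, faberSchauder_of_mem_left_half (hsub hright),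
      faberSchauder_of_mem_left_half (hsub hleft), Nat.mul_mod_right]
    simp only [zero_ne_one, decide_false, Bool.false_eq_true, if_false]
    field_simp; ring
  · rw [hj] at hsub
    rw [hj, show (2 * j + 1) / 2 = j by omega, faberSchauder_of_mem_right_half (hsub hright),
      faberSchauder_of_mem_right_half (hsub hleft), Nat.mul_add_mod]
    simp only [Nat.one_mod, decide_true, if_true]
    field_simp; ring

lemma Nat.xor_two_pow_div_two_pow {p q : ℕ} (h : p < q) (k : ℕ) :
    (k ^^^ 2 ^ p) / 2 ^ q = k / 2 ^ q := by
  refine Nat.eq_of_testBit_eq fun i => ?_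
  rw [Nat.testBit_div_two_pow, Nat.testBit_div_two_pow, Nat.testBit_xor,
    Nat.testBit_two_pow_of_ne (by omega), Bool.xor_false]

lemma dyadicSign_xor_of_ne {n m p : ℕ} (h : p ≠ n - m - 1) (k : ℕ) :
    dyadicSign n m (k ^^^ 2 ^ p) = dyadicSign n m k := by
  rw [dyadicSign, dyadicSign, Nat.testBit_xor, Nat.testBit_two_pow_of_ne h, Bool.xor_false]

lemma dyadicSign_xor_self (n m k : ℕ) :
    dyadicSign n m (k ^^^ 2 ^ (n - m - 1)) = -dyadicSign n m k := by
  rw [dyadicSign, dyadicSign, Nat.testBit_xor, Nat.testBit_two_pow_self, Bool.xor_true]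
  cases k.testBit (n - m - 1) <;> norm_num

lemma dyadicSign_sq (n m k : ℕ) : dyadicSign n m k ^ 2 = 1 := by
  unfold dyadicSign; split_ifs <;> norm_num

lemma Finset.sum_range_mul_div {M : Type*} [AddCommMonoid M] (f : ℕ → M) (a b : ℕ) :
    ∑ k ∈ range (a * b), f (k / b) = b • ∑ j ∈ range a, f j := by
  induction a with
  | zero => simp
  | succ a ih =>
    rw [Nat.succ_mul, sum_range_add, ih, sum_range_succ, smul_add]
    congr 1
    rcases b.eq_zero_or_pos with rfl | hb
    · simp
    · have hdiv : ∀ x ∈ range b, f ((a * b + x) / b) = f a := fun x hx => by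
        rw [mul_comm, Nat.mul_add_div hb, Nat.div_eq_of_lt (mem_range.1 hx), add_zero]
      rw [sum_congr rfl hdiv, sum_const, card_range]

lemma Finset.sum_sq_sum_of_orthogonal {ι κ R : Type*} [CommSemiring R] [DecidableEq ι]
    (s : Finset ι) (t : Finset κ) (f : ι → κ → R)
    (h : ∀ i ∈ s, ∀ j ∈ s, i ≠ j → ∑ k ∈ t, f i k * f j k = 0) :
    ∑ k ∈ t, (∑ i ∈ s, f i k) ^ 2 = ∑ i ∈ s, ∑ k ∈ t, f i k ^ 2 := by
  calc ∑ k ∈ t, (∑ i ∈ s, f i k) ^ 2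
        = ∑ i ∈ s, ∑ j ∈ s, ∑ k ∈ t, f i k * f j k := by
        simp_rw [sq, sum_mul_sum]
        rw [sum_comm]
        exact sum_congr rfl fun i _ => sum_comm
    _ = ∑ i ∈ s, ∑ k ∈ t, f i k * f i k :=
        sum_congr rfl fun i hi => sum_eq_single_of_mem i hi fun j hj hne => h i hi j hj hne.symm
    _ = ∑ i ∈ s, ∑ k ∈ t, f i k ^ 2 := by simp_rw [sq]

section SchauderSeries

variable (c : ℕ → ℕ → ℝ)

noncomputable def schauderLevel (m : ℕ) (t : ℝ) : ℝ :=
  ∑ k ∈ range (2 ^ m), c m k * faberSchauder m k t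

noncomputable def schauderSum (t : ℝ) : ℝ := ∑' m, schauderLevel c m t

noncomputable def schauderIncrement (n m k : ℕ) : ℝ :=
  c m (k / 2 ^ (n - m)) * dyadicSign n m k * ((2 : ℝ) ^ ((m : ℝ) / 2) / 2 ^ n)

lemma schauderSum_dyadic (n i : ℕ) :
    schauderSum c ((i : ℝ) / 2 ^ n)
      = ∑ m ∈ range n, schauderLevel c m ((i : ℝ) / 2 ^ n) := by
  refine tsum_eq_sum fun m hm => sum_eq_zero fun k _ => ?_
  rw [faberSchauder_dyadic_eq_zero (not_lt.1 (mem_range.not.1 hm)), mul_zero]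

lemma schauderLevel_increment {m n k : ℕ} (h : m < n) (hk : k < 2 ^ n) :
    schauderLevel c m (((k : ℝ) + 1) / 2 ^ n) - schauderLevel c m ((k : ℝ) / 2 ^ n)
      = schauderIncrement c n m k := by
  have hparent : k / 2 ^ (n - m) ∈ range (2 ^ m) := by
    rw [mem_range, Nat.div_lt_iff_lt_mul (by positivity), ← pow_add, Nat.add_sub_cancel' h.le]
    exact hk
  have hsub := dyadicIcc_subset h.le k
  rw [schauderLevel, schauderLevel, ← sum_sub_distrib, sum_eq_single_of_mem _ hparent,
    ← mul_sub, faberSchauder_increment h, schauderIncrement, mul_assoc]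
  intro j _ hj
  rw [faberSchauder_eq_zero_of_ne hj (hsub ⟨by gcongr; linarith, le_rfl⟩),
    faberSchauder_eq_zero_of_ne hj (hsub ⟨le_rfl, by gcongr; linarith⟩), sub_self]

lemma schauderSum_increment {n k : ℕ} (hk : k < 2 ^ n) :
    schauderSum c (((k : ℝ) + 1) / 2 ^ n) - schauderSum c ((k : ℝ) / 2 ^ n)
      = ∑ m ∈ range n, schauderIncrement c n m k := by
  rw [← Nat.cast_succ, schauderSum_dyadic, schauderSum_dyadic, ← sum_sub_distrib, Nat.cast_succ]
  exact sum_congr rfl fun m hm => schauderLevel_increment c (mem_range.1 hm) hk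

lemma schauderIncrement_xor_of_lt {n m p : ℕ} (hp : p < n - m - 1) (k : ℕ) :
    schauderIncrement c n m (k ^^^ 2 ^ p) = schauderIncrement c n m k := by
  rw [schauderIncrement, schauderIncrement, Nat.xor_two_pow_div_two_pow (by omega),
    dyadicSign_xor_of_ne hp.ne]

lemma schauderIncrement_xor_self {n m : ℕ} (h : m < n) (k : ℕ) :
    schauderIncrement c n m (k ^^^ 2 ^ (n - m - 1)) = -schauderIncrement c n m k := by
  rw [schauderIncrement, schauderIncrement, Nat.xor_two_pow_div_two_pow (by omega),
    dyadicSign_xor_self]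
  ring

lemma sum_schauderIncrement_mul_eq_zero {n m m' : ℕ} (hm : m < m') (hm' : m' < n) :
    ∑ k ∈ range (2 ^ n), schauderIncrement c n m k * schauderIncrement c n m' k = 0 := by
  set p := n - m' - 1
  refine sum_involution (fun k _ => k ^^^ 2 ^ p) (fun k _ => ?_) (fun k _ _ => ?_)
    (fun k hk => ?_) (fun k _ => xor_cancel_right _ _)
  · rw [schauderIncrement_xor_of_lt c (by omega), schauderIncrement_xor_self c hm']
    ring
  · intro hfix
    have := congrArg (Nat.testBit · p) hfix
    simp [Nat.testBit_xor] at this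
  · exact mem_range.2 (Nat.xor_lt_two_pow (mem_range.1 hk)
      (Nat.pow_lt_pow_right one_lt_two (by omega)))

lemma sum_schauderIncrement_sq {n m : ℕ} (h : m ≤ n) :
    ∑ k ∈ range (2 ^ n), schauderIncrement c n m k ^ 2
      = (∑ j ∈ range (2 ^ m), c m j ^ 2) / 2 ^ n := by
  obtain ⟨d, rfl⟩ := Nat.exists_eq_add_of_le h
  have hsq : ((2 : ℝ) ^ ((m : ℝ) / 2)) ^ 2 = 2 ^ m := by
    rw [← Real.rpow_mul_natCast zero_le_two]; norm_num
  simp_rw [schauderIncrement, Nat.add_sub_cancel_left, mul_pow, dyadicSign_sq, mul_one, div_pow,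
    hsq]
  rw [← sum_mul, pow_add 2 m d, sum_range_mul_div (fun j => c m j ^ 2), nsmul_eq_mul]
  push_cast
  field_simp
  ring

theorem sum_sq_schauderSum_increment (n : ℕ) :
    ∑ k ∈ range (2 ^ n),
        (schauderSum c (((k : ℝ) + 1) / 2 ^ n) - schauderSum c ((k : ℝ) / 2 ^ n)) ^ 2
      = (∑ m ∈ range n, ∑ j ∈ range (2 ^ m), c m j ^ 2) / 2 ^ n := by
  calc _ = ∑ k ∈ range (2 ^ n), (∑ m ∈ range n, schauderIncrement c n m k) ^ 2 :=
        sum_congr rfl fun k hk => by rw [schauderSum_increment c (mem_range.1 hk)]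
    _ = ∑ m ∈ range n, ∑ k ∈ range (2 ^ n), schauderIncrement c n m k ^ 2 := by
        refine sum_sq_sum_of_orthogonal _ _ _ fun m hm m' hm' hne => ?_
        rcases hne.lt_or_gt with hlt | hlt
        · exact sum_schauderIncrement_mul_eq_zero c hlt (mem_range.1 hm')
        · simp_rw [mul_comm (schauderIncrement c n m _)]
          exact sum_schauderIncrement_mul_eq_zero c hlt (mem_range.1 hm)
    _ = _ := by
        rw [sum_div]
        exact sum_congr rfl fun m hm => sum_schauderIncrement_sq c (mem_range.1 hm).le

end SchauderSeries

section Convergence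

variable {c : ℕ → ℕ → ℝ}

lemma abs_schauderLevel_le {m : ℕ} {B : ℝ} (hc : ∀ k, |c m k| ≤ B) (t : ℝ) :
    |schauderLevel c m t| ≤ B * ((2 : ℝ) ^ ((m : ℝ) / 2) / 2 ^ (m + 1)) := by
  have hB : 0 ≤ B := (abs_nonneg _).trans (hc 0)
  set j := ⌊2 ^ m * t⌋₊
  have hvanish : ∀ k ≠ j, c m k * faberSchauder m k t = 0 := fun k hk => by
    by_contra hne
    exact hk (eq_floor_of_faberSchauder_ne_zero (right_ne_zero_of_mul hne))
  rw [schauderLevel]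
  by_cases hj : j ∈ range (2 ^ m)
  · rw [sum_eq_single_of_mem j hj fun k _ hk => hvanish k hk, abs_mul,
      abs_of_nonneg (faberSchauder_nonneg m j t)]
    exact mul_le_mul (hc j) (faberSchauder_le m j t) (faberSchauder_nonneg m j t) hB
  · rw [sum_eq_zero fun k hk => hvanish k (ne_of_mem_of_not_mem hk hj), abs_zero]
    positivity

variable {b : ℕ → ℝ} (hc : ∀ m k, |c m k| ≤ b m)
  (hb : Summable fun m : ℕ => b m * ((2 : ℝ) ^ ((m : ℝ) / 2) / 2 ^ (m + 1)))
include hc hb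

lemma tendstoUniformly_schauderSum :
    TendstoUniformly (fun N t => ∑ m ∈ range N, schauderLevel c m t) (schauderSum c) atTop :=
  tendstoUniformly_tsum_nat hb fun m t => abs_schauderLevel_le (hc m) t

lemma continuous_schauderSum : Continuous (schauderSum c) :=
  continuous_tsum (fun m => continuous_finsetSum _ fun k _ =>
    continuous_const.mul (continuous_faberSchauder m k)) hb fun m t => abs_schauderLevel_le (hc m) t

end Convergence

lemma tendsto_geom_sum_div_pow {a : ℝ} (ha : 1 < a) :
    Tendsto (fun n : ℕ => (∑ m ∈ range n, a ^ m) / a ^ n) atTop (𝓝 (1 / (a - 1))) := by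
  have hlim : Tendsto (fun n : ℕ => a⁻¹ ^ n) atTop (𝓝 0) :=
    tendsto_pow_atTop_nhds_zero_of_lt_one (by positivity) (inv_lt_one_of_one_lt₀ ha)
  have hform : ∀ n : ℕ, (∑ m ∈ range n, a ^ m) / a ^ n = (1 - a⁻¹ ^ n) / (a - 1) := by
    intro n
    rw [geom_sum_eq ha.ne', inv_pow]
    field_simp
  simpa only [hform, sub_zero] using
    ((tendsto_const_nhds (x := (1 : ℝ))).sub hlim).div_const (a - 1)

noncomputable def takagiWeight (H : ℝ) (m : ℕ) : ℝ := (2 : ℝ) ^ ((m : ℝ) * (1 / 2 - H))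

lemma takagiWeight_pos (H : ℝ) (m : ℕ) : 0 < takagiWeight H m := by
  unfold takagiWeight; positivity

lemma takagiWeight_mul_peak (H : ℝ) (m : ℕ) :
    takagiWeight H m * ((2 : ℝ) ^ ((m : ℝ) / 2) / 2 ^ (m + 1))
      = ((2 : ℝ) ^ (-H)) ^ m / 2 := by
  rw [takagiWeight, ← mul_div_assoc, ← Real.rpow_add two_pos,
    ← Real.rpow_mul_natCast zero_le_two, pow_succ, ← div_div, div_left_inj' two_ne_zero,
    ← Real.rpow_natCast, ← Real.rpow_sub two_pos]
  ring_nf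

lemma summable_takagiWeight_mul_peak {H : ℝ} (hH : 0 < H) :
    Summable fun m : ℕ => takagiWeight H m * ((2 : ℝ) ^ ((m : ℝ) / 2) / 2 ^ (m + 1)) := by
  simp_rw [takagiWeight_mul_peak]
  exact (summable_geometric_of_lt_one (by positivity)
    (Real.rpow_lt_one_of_one_lt_of_neg one_lt_two (neg_neg_of_pos hH))).div_const 2

lemma two_pow_mul_takagiWeight_sq (H : ℝ) (m : ℕ) :
    2 ^ m * takagiWeight H m ^ 2 = ((2 : ℝ) ^ (2 - 2 * H)) ^ m := by
  rw [takagiWeight, ← Real.rpow_mul_natCast zero_le_two, ← Real.rpow_natCast,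
    ← Real.rpow_add two_pos, ← Real.rpow_mul_natCast zero_le_two]
  push_cast
  ring_nf

lemma two_rpow_neg_mul_div_two_pow (H : ℝ) (n : ℕ) :
    (2 : ℝ) ^ (-(n : ℝ) * (1 - 2 * H)) / 2 ^ n = (((2 : ℝ) ^ (2 - 2 * H)) ^ n)⁻¹ := by
  rw [← Real.rpow_natCast, ← Real.rpow_natCast, ← Real.rpow_mul zero_le_two,
    ← Real.rpow_sub two_pos, ← Real.rpow_neg zero_le_two]
  ring_nf

/-- For `H ∈ (0,1)` and arbitrary signs `θ_{m,k} ∈ {−1,+1}`, the Takagi-class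
series `x(t) = Σ_m 2^{m(1/2−H)} Σ_k θ_{m,k} e_{m,k}(t)` converges uniformly on `[0,1]` to a
continuous function, and the scaled dyadic quadratic variation sums with exponent `γ = 1−2H`
converge: `2^{−n(1−2H)} Σ_{k<2^n} (x((k+1)/2^n) − x(k/2^n))² → 1/(2^{2−2H} − 1)`. -/
theorem takagi_class_scaled_qv
    (H : ℝ) (hH : H ∈ Set.Ioo (0 : ℝ) 1)
    (θ : ℕ → ℕ → ℝ) (hθ : ∀ m k : ℕ, θ m k = 1 ∨ θ m k = -1) :
    ∃ x : ℝ → ℝ,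
      TendstoUniformlyOn
        (fun M t => ∑ m ∈ Finset.range M, (2 : ℝ) ^ ((m : ℝ) * (1 / 2 - H)) *
          ∑ k ∈ Finset.range (2 ^ m), θ m k * faberSchauder m k t)
        x atTop (Set.Icc 0 1)
      ∧ ContinuousOn x (Set.Icc 0 1)
      ∧ Tendsto
          (fun n : ℕ => (2 : ℝ) ^ (-(n : ℝ) * (1 - 2 * H)) *
            ∑ k ∈ Finset.range (2 ^ n),
              (x (((k : ℝ) + 1) / 2 ^ n) - x ((k : ℝ) / 2 ^ n)) ^ 2)
          atTop (𝓝 (1 / ((2 : ℝ) ^ (2 - 2 * H) - 1))) := by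
  obtain ⟨hH0, hH1⟩ := hH
  set c : ℕ → ℕ → ℝ := fun m k => takagiWeight H m * θ m k
  have habs : ∀ m k, |c m k| ≤ takagiWeight H m := fun m k => by
    rcases hθ m k with h | h <;> simp [c, h, abs_of_pos (takagiWeight_pos H m)]
  have hsq : ∀ m, ∑ j ∈ range (2 ^ m), c m j ^ 2 = ((2 : ℝ) ^ (2 - 2 * H)) ^ m := by
    intro m
    have hθsq : ∀ j, c m j ^ 2 = takagiWeight H m ^ 2 := fun j => by
      rcases hθ m j with h | h <;> simp [c, h]
    simp_rw [hθsq, sum_const, card_range, nsmul_eq_mul, Nat.cast_pow, Nat.cast_ofNat,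
      two_pow_mul_takagiWeight_sq]
  have hb := summable_takagiWeight_mul_peak hH0
  refine ⟨schauderSum c, ?_, (continuous_schauderSum habs hb).continuousOn, ?_⟩
  · convert (tendstoUniformly_schauderSum habs hb).tendstoUniformlyOn using 3 with M t
    simp_rw [schauderLevel, c, mul_assoc, ← mul_sum, takagiWeight]
  · refine (tendsto_geom_sum_div_pow (Real.one_lt_rpow one_lt_two (by linarith))).congr fun n => ?_
    rw [sum_sq_schauderSum_increment, sum_congr rfl fun m _ => hsq m, mul_div_left_comm,
      two_rpow_neg_mul_div_two_pow, div_eq_mul_inv]
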